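/- arXiv:2508.21637 — 2 statements merged into one kernel-verified Lean document; each statement's English description precedes it below -/
import Mathlib

section
/- Single INCONS list suffices: under the A-MHA* invariant that every state inserted into any OPEN_i (i ≥ 1) is also inserted into OPEN₀, and that a state in CLOSED_anch is never in any OPEN_i, prove that after ImprovePath exits, the set of locally inconsistent states (states whose g-value decreased after they were placed in some CLOSED set) is exactly contained in INCONS ∪ OPEN₀. -/
open Classical

/-- Abstract state of A-MHA*'s ImprovePath bookkeeping. `dec` is the set of locally
inconsistent states: states whose `g`-value decreased after they were placed in some
CLOSED set. -/
structure MState (S : Type*) (N : ℕ) where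
  open0 : Set S
  openi : Fin N → Set S
  ca : Set S      -- CLOSED_anch
  ci : Set S      -- CLOSED_inad
  incons : Set S  -- INCONS
  dec : Set S     -- locally inconsistent states

/-- Transitions of ImprovePath. Discovering a better path to `s'`: if `s' ∈ CLOSED_anch`,
add it to INCONS; otherwise insert it into OPEN₀ (and into some OPEN_i's only if
`s' ∉ CLOSED_inad`). Expansions move a state from the open sets into the appropriate
closed set (and resolve its local inconsistency). -/
inductive MStep {S : Type*} {N : ℕ} : MState S N → MState S N → Prop where
  | decreaseClosedAnch (σ : MState S N) (s' : S) (h : s' ∈ σ.ca) :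
      MStep σ { σ with incons := σ.incons ∪ {s'}, dec := σ.dec ∪ {s'} }
  | decreaseOther (σ : MState S N) (s' : S) (h : s' ∉ σ.ca) (J : Set (Fin N)) :
      MStep σ { σ with
        open0 := σ.open0 ∪ {s'},
        openi := fun i => if s' ∉ σ.ci ∧ i ∈ J then σ.openi i ∪ {s'} else σ.openi i,
        dec := if s' ∈ σ.ci then σ.dec ∪ {s'} else σ.dec }
  | expandAnchor (σ : MState S N) (s : S) (h : s ∈ σ.open0) :
      MStep σ ⟨σ.open0 \ {s}, fun i => σ.openi i \ {s},
        σ.ca ∪ {s}, σ.ci, σ.incons, σ.dec \ {s}⟩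
  | expandInad (σ : MState S N) (s : S) (i : Fin N)
      (h : s ∈ σ.openi i) (h1 : s ∉ σ.ca) (h2 : s ∉ σ.ci) :
      MStep σ ⟨σ.open0 \ {s}, fun i => σ.openi i \ {s},
        σ.ca, σ.ci ∪ {s}, σ.incons, σ.dec \ {s}⟩

/-- A single INCONS list suffices: in any state reachable from the empty initial state,
every locally inconsistent state lies in `INCONS ∪ OPEN₀` (using the invariants that
`OPEN_i ⊆ OPEN₀` for `i ≥ 1` and `CLOSED_anch ∩ OPEN₀ = ∅`). -/
theorem amha_single_incons_suffices {S : Type*} {N : ℕ}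
    (σ0 : MState S N)
    (h0 : σ0.open0 = ∅ ∧ (∀ i, σ0.openi i = ∅) ∧ σ0.ca = ∅ ∧ σ0.ci = ∅ ∧
      σ0.incons = ∅ ∧ σ0.dec = ∅)
    (σ : MState S N) (hrun : Relation.ReflTransGen MStep σ0 σ) :
    (∀ i, σ.openi i ⊆ σ.open0) ∧ σ.ca ∩ σ.open0 = ∅ ∧
    σ.dec ⊆ σ.incons ∪ σ.open0 := by
  obtain ⟨h1, h2, h3, h4, h5, h6⟩ := h0
  induction hrun with
  | refl =>
    refine ⟨fun i => by simp [h2 i], by simp [h3, h1], by simp [h6]⟩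
  | tail _ hstep ih =>
    obtain ⟨ih1, ih2, ih3⟩ := ih
    cases hstep with
    | decreaseClosedAnch s' h =>
      refine ⟨ih1, ih2, ?_⟩
      intro x hx
      rcases hx with hx | hx
      · rcases ih3 hx with h' | h'
        · exact Or.inl (Or.inl h')
        · exact Or.inr h'
      · exact Or.inl (Or.inr hx)
    | decreaseOther s' h J =>
      refine ⟨?_, ?_, ?_⟩
      · intro i x hx
        simp only at hx
        split at hx
        · rcases hx with hx | hx
          · exact Or.inl (ih1 i hx)
          · exact Or.inr hx
        · exact Or.inl (ih1 i hx)
      · simp only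
        rw [Set.inter_union_distrib_left, ih2]
        simp [h]
      · intro x hx
        simp only at hx ⊢
        split at hx
        · rcases hx with hx | hx
          · rcases ih3 hx with h' | h'
            · exact Or.inl h'
            · exact Or.inr (Or.inl h')
          · exact Or.inr (Or.inr hx)
        · rcases ih3 hx with h' | h'
          · exact Or.inl h'
          · exact Or.inr (Or.inl h')
    | expandAnchor s h =>
      refine ⟨?_, ?_, ?_⟩
      · intro i x hx
        exact ⟨ih1 i hx.1, hx.2⟩
      · ext x
        simp only [Set.mem_inter_iff, Set.mem_union, Set.mem_diff, Set.mem_singleton_iff,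
          Set.mem_empty_iff_false, iff_false]
        rintro ⟨hca | hs, ho, hne⟩
        · exact (Set.eq_empty_iff_forall_notMem.mp ih2 x) ⟨hca, ho⟩
        · exact hne hs
      · rintro x ⟨hx, hne⟩
        rcases ih3 hx with h' | h'
        · exact Or.inl h'
        · exact Or.inr ⟨h', hne⟩
    | expandInad s i h hh1 hh2 =>
      refine ⟨?_, ?_, ?_⟩
      · intro j x hx
        exact ⟨ih1 j hx.1, hx.2⟩
      · ext x
        simp only [Set.mem_inter_iff, Set.mem_diff, Set.mem_empty_iff_false, iff_false]
        rintro ⟨hca, ho, _⟩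
        exact (Set.eq_empty_iff_forall_notMem.mp ih2 x) ⟨hca, ho⟩
      · rintro x ⟨hx, hne⟩
        rcases ih3 hx with h' | h'
        · exact Or.inl h'
        · exact Or.inr ⟨h', hne⟩
end

section
/- Linear conflict plus Manhattan distance is admissible for the sliding-tile puzzle: for any solvable configuration, MD(s) + 2·LC(s) is a lower bound on the number of moves needed to reach the goal configuration, where LC(s) counts linear conflicts. -/
variable {n : ℕ}

/-- Manhattan distance between two cells of an `n × n` board. -/
def mdist (p q : Fin n × Fin n) : ℕ :=
  Nat.dist p.1.val q.1.val + Nat.dist p.2.val q.2.val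

/-- A legal move with blank tile `b`: swap the blank with an orthogonally
adjacent tile. A state is a bijection sending each cell to the tile occupying it,
tiles being named by their goal cell; the goal state is `Equiv.refl`. -/
def Move (b : Fin n × Fin n) (s s' : Equiv.Perm (Fin n × Fin n)) : Prop :=
  ∃ p q, mdist p q = 1 ∧ s p = b ∧ s' = (Equiv.swap p q).trans s

/-- Sum over non-blank tiles of the Manhattan distance to their goal cells. -/
def MD (b : Fin n × Fin n) (s : Equiv.Perm (Fin n × Fin n)) : ℕ :=
  ∑ p : Fin n × Fin n, if s p = b then 0 else mdist p (s p)

/-- Columns `j < k` of row `r` hold a linear conflict: both tiles are non-blank,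
both have their goal in row `r`, and their goal columns are in reversed order. -/
def RowConf (b : Fin n × Fin n) (s : Equiv.Perm (Fin n × Fin n))
    (r j k : Fin n) : Prop :=
  j < k ∧ s (r, j) ≠ b ∧ s (r, k) ≠ b ∧
    (s (r, j)).1 = r ∧ (s (r, k)).1 = r ∧ (s (r, k)).2 < (s (r, j)).2

/-- Rows `j < k` of column `cc` hold a linear conflict. -/
def ColConf (b : Fin n × Fin n) (s : Equiv.Perm (Fin n × Fin n))
    (cc j k : Fin n) : Prop :=
  j < k ∧ s (j, cc) ≠ b ∧ s (k, cc) ≠ b ∧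
    (s (j, cc)).2 = cc ∧ (s (k, cc)).2 = cc ∧ (s (k, cc)).1 < (s (j, cc)).1

/-- Linear-conflict count of a row: the least number of tiles that must be removed
from the row so that no conflict remains (the number of required extra detours). -/
noncomputable def lcRow (b : Fin n × Fin n) (s : Equiv.Perm (Fin n × Fin n))
    (r : Fin n) : ℕ :=
  sInf {m | ∃ R : Finset (Fin n), R.card = m ∧
    ∀ j k, RowConf b s r j k → j ∈ R ∨ k ∈ R}

/-- Linear-conflict count of a column. -/
noncomputable def lcCol (b : Fin n × Fin n) (s : Equiv.Perm (Fin n × Fin n))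
    (cc : Fin n) : ℕ :=
  sInf {m | ∃ R : Finset (Fin n), R.card = m ∧
    ∀ j k, ColConf b s cc j k → j ∈ R ∨ k ∈ R}

/-- Total linear-conflict count. -/
noncomputable def LC (b : Fin n × Fin n) (s : Equiv.Perm (Fin n × Fin n)) : ℕ :=
  (∑ r : Fin n, lcRow b s r) + (∑ cc : Fin n, lcCol b s cc)

/-! Every move changes `MD + 2 * LC` by at most one. When the blank moves along a row, the
non-blank tiles of that row keep their relative order, so no row conflict disappears. The tile
that moves leaves one column and enters another: entering can only create conflicts, and leaving
shrinks a minimum cover of that column's conflicts by at most one tile, and only if the tile was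
in its goal column; but then the move costs that tile one unit of Manhattan distance. Vertical
moves become horizontal ones after transposing the board, which swaps row and column conflicts
and preserves `MD`. -/

open Equiv

section CoverNumber

variable {α β : Type*}

noncomputable def coverNumber (C : α → α → Prop) : ℕ :=
  sInf {m | ∃ R : Finset α, R.card = m ∧ ∀ j k, C j k → j ∈ R ∨ k ∈ R}

variable {C : α → α → Prop}

theorem coverNumber_le_card {R : Finset α} (h : ∀ j k, C j k → j ∈ R ∨ k ∈ R) :
    coverNumber C ≤ R.card :=
  Nat.sInf_le ⟨R, rfl, h⟩

theorem exists_cover_card_eq_coverNumber [Fintype α] (C : α → α → Prop) :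
    ∃ R : Finset α, R.card = coverNumber C ∧ ∀ j k, C j k → j ∈ R ∨ k ∈ R :=
  Nat.sInf_mem (s := {m | ∃ R : Finset α, R.card = m ∧ ∀ j k, C j k → j ∈ R ∨ k ∈ R})
    ⟨_, Finset.univ, rfl, fun j _ _ => Or.inl (Finset.mem_univ j)⟩

theorem coverNumber_eq_zero (h : ∀ j k, ¬C j k) : coverNumber C = 0 :=
  Nat.le_zero.mp <| by simpa using coverNumber_le_card (R := ∅) fun j k hjk => (h j k hjk).elim

theorem coverNumber_le_of_map [Fintype β] {C' : β → β → Prop} (e : α ≃ β)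
    (h : ∀ j k, C j k → C' (e j) (e k)) : coverNumber C ≤ coverNumber C' := by
  obtain ⟨R, hR, hcover⟩ := exists_cover_card_eq_coverNumber C'
  calc coverNumber C ≤ (R.map e.symm.toEmbedding).card :=
        coverNumber_le_card fun j k hjk => by
          simpa [Finset.mem_map_equiv] using hcover _ _ (h j k hjk)
    _ = coverNumber C' := by rw [Finset.card_map, hR]

theorem coverNumber_le_add_one [Fintype α] {C' : α → α → Prop} (a : α)
    (h : ∀ j k, C j k → C' j k ∨ j = a ∨ k = a) : coverNumber C ≤ coverNumber C' + 1 := by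
  classical
  obtain ⟨R, hR, hcover⟩ := exists_cover_card_eq_coverNumber C'
  calc coverNumber C ≤ (insert a R).card :=
        coverNumber_le_card fun j k hjk => by
          rcases h j k hjk with h' | rfl | rfl
          · exact (hcover j k h').imp Finset.mem_insert_of_mem Finset.mem_insert_of_mem
          · exact Or.inl (Finset.mem_insert_self _ _)
          · exact Or.inr (Finset.mem_insert_self _ _)
    _ ≤ coverNumber C' + 1 := hR ▸ Finset.card_insert_le a R

end CoverNumber

theorem strictMonoOn_swap_of_covBy {α : Type*} [LinearOrder α] {a b : α} (h : a ⋖ b ∨ b ⋖ a) :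
    StrictMonoOn (swap a b) {a}ᶜ := by
  intro j hj k hk hjk
  simp only [Set.mem_compl_iff, Set.mem_singleton_iff] at hj hk
  rw [swap_apply_def, swap_apply_def, if_neg hj, if_neg hk]
  split_ifs with hjb hkb hkb
  · exact absurd (hjb.trans hkb.symm) hjk.ne
  · subst hjb
    rcases h with hab | hba
    · exact hab.lt.trans hjk
    · exact (hba.ge_of_gt hjk).lt_of_ne' hk
  · subst hkb
    rcases h with hab | hba
    · exact (hab.le_of_lt hjk).lt_of_ne hj
    · exact hjk.trans hba.lt
  · exact hjk

theorem swap_mk_apply_mk {α β : Type*} [DecidableEq α] [DecidableEq β] (a : α) (b₁ b₂ b : β) :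
    swap (a, b₁) (a, b₂) (a, b) = (a, swap b₁ b₂ b) := by
  simp only [swap_apply_def, Prod.mk.injEq, true_and]
  split_ifs <;> rfl

theorem Fin.covBy_or_covBy_of_dist_eq_one {a b : Fin n} (h : Nat.dist a b = 1) :
    a ⋖ b ∨ b ⋖ a := by
  simp only [Fin.covBy_iff, Nat.covBy_iff_add_one_eq]
  unfold Nat.dist at h
  omega

theorem lcRow_eq_coverNumber (b : Fin n × Fin n) (s : Perm (Fin n × Fin n)) (r : Fin n) :
    lcRow b s r = coverNumber (RowConf b s r) := rfl

theorem lcCol_eq_coverNumber (b : Fin n × Fin n) (s : Perm (Fin n × Fin n)) (c : Fin n) :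
    lcCol b s c = coverNumber (ColConf b s c) := rfl

theorem RowConf.of_apply_eq {b : Fin n × Fin n} {s s' : Perm (Fin n × Fin n)} {r j k j' k' : Fin n}
    (h : RowConf b s r j k) (hlt : j' < k') (hj : s' (r, j') = s (r, j))
    (hk : s' (r, k') = s (r, k)) : RowConf b s' r j' k' := by
  obtain ⟨-, h⟩ := h
  exact ⟨hlt, hj ▸ hk ▸ h⟩

theorem ColConf.of_apply_eq {b : Fin n × Fin n} {s s' : Perm (Fin n × Fin n)} {c j k j' k' : Fin n}
    (h : ColConf b s c j k) (hlt : j' < k') (hj : s' (j', c) = s (j, c))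
    (hk : s' (k', c) = s (k, c)) : ColConf b s' c j' k' := by
  obtain ⟨-, h⟩ := h
  exact ⟨hlt, hj ▸ hk ▸ h⟩

theorem MD_swap_trans_add {b p q : Fin n × Fin n} {s : Perm (Fin n × Fin n)} (hpq : p ≠ q)
    (hb : s p = b) : MD b ((swap p q).trans s) + mdist q (s q) = MD b s + mdist p (s q) := by
  have hqb : s q ≠ b := fun h => hpq (s.injective (hb.trans h.symm))
  have hreindex : MD b ((swap p q).trans s) =
      ∑ y, if s y = b then 0 else mdist (swap p q y) (s y) := by
    rw [MD, ← Equiv.sum_comp (swap p q)]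
    simp
  have hagree : ∀ y ∈ ({q}ᶜ : Finset _),
      (if s y = b then 0 else mdist (swap p q y) (s y)) = if s y = b then 0 else mdist y (s y) := by
    intro y hy
    rcases eq_or_ne y p with rfl | hyp
    · simp [hb]
    · rw [swap_apply_of_ne_of_ne hyp (by simpa using hy)]
  rw [hreindex, MD, Fintype.sum_eq_add_sum_compl q, Fintype.sum_eq_add_sum_compl q,
    Finset.sum_congr rfl hagree, if_neg hqb, if_neg hqb, swap_apply_right]
  omega

section RowMove

variable {b : Fin n × Fin n} {s : Perm (Fin n × Fin n)} {r c₁ c₂ : Fin n}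

theorem rowConf_swap_trans (hadj : c₁ ⋖ c₂ ∨ c₂ ⋖ c₁) (hb : s (r, c₁) = b) {j k : Fin n}
    (h : RowConf b s r j k) :
    RowConf b ((swap (r, c₁) (r, c₂)).trans s) r (swap c₁ c₂ j) (swap c₁ c₂ k) := by
  have hj : j ≠ c₁ := by rintro rfl; exact h.2.1 hb
  have hk : k ≠ c₁ := by rintro rfl; exact h.2.2.1 hb
  exact h.of_apply_eq (strictMonoOn_swap_of_covBy hadj hj hk h.1)
    (by simp [swap_mk_apply_mk]) (by simp [swap_mk_apply_mk])

theorem rowConf_swap_trans_of_ne {r' j k : Fin n} (hr : r' ≠ r) (h : RowConf b s r' j k) :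
    RowConf b ((swap (r, c₁) (r, c₂)).trans s) r' j k := by
  have hp (c : Fin n) : (r', c) ≠ (r, c₁) := by simp [hr]
  have hq (c : Fin n) : (r', c) ≠ (r, c₂) := by simp [hr]
  exact h.of_apply_eq h.1 (by simp [swap_apply_of_ne_of_ne (hp j) (hq j)])
    (by simp [swap_apply_of_ne_of_ne (hp k) (hq k)])

theorem lcRow_le_lcRow_swap_trans (hadj : c₁ ⋖ c₂ ∨ c₂ ⋖ c₁) (hb : s (r, c₁) = b) (r' : Fin n) :
    lcRow b s r' ≤ lcRow b ((swap (r, c₁) (r, c₂)).trans s) r' := by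
  rw [lcRow_eq_coverNumber, lcRow_eq_coverNumber]
  rcases eq_or_ne r' r with rfl | hr
  · exact coverNumber_le_of_map (swap c₁ c₂) fun _ _ => rowConf_swap_trans hadj hb
  · exact coverNumber_le_of_map (Equiv.refl _) fun _ _ => rowConf_swap_trans_of_ne hr

theorem colConf_swap_trans (hb : s (r, c₁) = b) {c j k : Fin n} (h : ColConf b s c j k) :
    ColConf b ((swap (r, c₁) (r, c₂)).trans s) c j k ∨
      (c = c₂ ∧ (s (r, c₂)).2 = c₂ ∧ (j = r ∨ k = r)) := by
  by_cases hq : (j, c) = (r, c₂) ∨ (k, c) = (r, c₂)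
  · right
    rcases hq with hq | hq <;> obtain ⟨rfl, rfl⟩ := Prod.mk.inj hq
    · exact ⟨rfl, h.2.2.2.1, Or.inl rfl⟩
    · exact ⟨rfl, h.2.2.2.2.1, Or.inr rfl⟩
  · left
    rw [not_or] at hq
    have hj : (j, c) ≠ (r, c₁) := fun e => h.2.1 (e ▸ hb)
    have hk : (k, c) ≠ (r, c₁) := fun e => h.2.2.1 (e ▸ hb)
    exact h.of_apply_eq h.1 (by simp [swap_apply_of_ne_of_ne hj hq.1])
      (by simp [swap_apply_of_ne_of_ne hk hq.2])

theorem lcCol_le_lcCol_swap_trans (hb : s (r, c₁) = b) (c : Fin n) :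
    lcCol b s c ≤ lcCol b ((swap (r, c₁) (r, c₂)).trans s) c +
      if c = c₂ ∧ (s (r, c₂)).2 = c₂ then 1 else 0 := by
  rw [lcCol_eq_coverNumber, lcCol_eq_coverNumber]
  split_ifs with hc
  · exact coverNumber_le_add_one r fun _ _ h => (colConf_swap_trans hb h).imp_right (·.2.2)
  · exact coverNumber_le_of_map (Equiv.refl _) fun _ _ h =>
      (colConf_swap_trans hb h).resolve_right fun h' => hc ⟨h'.1, h'.2.1⟩

theorem LC_le_LC_swap_trans (hadj : c₁ ⋖ c₂ ∨ c₂ ⋖ c₁) (hb : s (r, c₁) = b) :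
    LC b s ≤ LC b ((swap (r, c₁) (r, c₂)).trans s) + if (s (r, c₂)).2 = c₂ then 1 else 0 := by
  have hrows := Finset.sum_le_sum fun r' (_ : r' ∈ Finset.univ) =>
    lcRow_le_lcRow_swap_trans (c₂ := c₂) hadj hb r'
  have hcols := Finset.sum_le_sum fun c (_ : c ∈ Finset.univ) =>
    lcCol_le_lcCol_swap_trans (c₂ := c₂) hb c
  have hone : (∑ c : Fin n, if c = c₂ ∧ (s (r, c₂)).2 = c₂ then 1 else 0) =
      if (s (r, c₂)).2 = c₂ then 1 else 0 := by
    split_ifs with ht <;> simp [ht]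
  rw [Finset.sum_add_distrib, hone] at hcols
  unfold LC
  omega

theorem MD_add_two_mul_LC_le_of_row_move (hd : Nat.dist c₁ c₂ = 1) (hb : s (r, c₁) = b) :
    MD b s + 2 * LC b s ≤
      MD b ((swap (r, c₁) (r, c₂)).trans s) + 2 * LC b ((swap (r, c₁) (r, c₂)).trans s) + 1 := by
  have hpq : (r, c₁) ≠ (r, c₂) := by rintro ⟨⟩; simp at hd
  have hMD := MD_swap_trans_add hpq hb
  have hLC := LC_le_LC_swap_trans (c₂ := c₂) (Fin.covBy_or_covBy_of_dist_eq_one hd) hb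
  set t := s (r, c₂)
  unfold Nat.dist at hd
  split_ifs at hLC with ht
  · have hgoal : mdist (r, c₁) t = mdist (r, c₂) t + 1 := by
      have := congrArg Fin.val ht
      simp only [mdist, Nat.dist] at this ⊢
      omega
    omega
  · have htriangle : mdist (r, c₂) t ≤ mdist (r, c₁) t + 1 := by
      simp only [mdist, Nat.dist]
      omega
    omega

end RowMove

section Transpose

variable (b : Fin n × Fin n) (s : Perm (Fin n × Fin n))

theorem MD_prodComm_permCongr : MD b.swap ((prodComm (Fin n) (Fin n)).permCongr s) = MD b s := by
  refine Fintype.sum_equiv (prodComm (Fin n) (Fin n)) _ _ fun x => ?_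
  simp [mdist, add_comm]

theorem rowConf_prodComm_permCongr (c : Fin n) :
    RowConf b.swap ((prodComm (Fin n) (Fin n)).permCongr s) c = ColConf b s c := by
  ext j k
  simp [RowConf, ColConf]

theorem colConf_prodComm_permCongr (r : Fin n) :
    ColConf b.swap ((prodComm (Fin n) (Fin n)).permCongr s) r = RowConf b s r := by
  ext j k
  simp [RowConf, ColConf]

theorem LC_prodComm_permCongr : LC b.swap ((prodComm (Fin n) (Fin n)).permCongr s) = LC b s := by
  simp only [LC, lcRow_eq_coverNumber, lcCol_eq_coverNumber, rowConf_prodComm_permCongr,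
    colConf_prodComm_permCongr, add_comm]

theorem prodComm_permCongr_swap_trans (p q : Fin n × Fin n) :
    (prodComm (Fin n) (Fin n)).permCongr ((swap p q).trans s) =
      (swap p.swap q.swap).trans ((prodComm (Fin n) (Fin n)).permCongr s) := by
  rw [← permCongr_trans, permCongr_def, symm_trans_swap_trans]
  rfl

end Transpose

theorem MD_add_two_mul_LC_le_of_move {b : Fin n × Fin n} {s s' : Perm (Fin n × Fin n)}
    (h : Move b s s') : MD b s + 2 * LC b s ≤ MD b s' + 2 * LC b s' + 1 := by
  obtain ⟨⟨r₁, c₁⟩, ⟨r₂, c₂⟩, hd, hb, rfl⟩ := h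
  have hcases : (r₁ = r₂ ∧ Nat.dist c₁ c₂ = 1) ∨ (c₁ = c₂ ∧ Nat.dist r₁ r₂ = 1) := by
    simp only [mdist, Nat.dist, Fin.ext_iff] at hd ⊢
    omega
  rcases hcases with ⟨rfl, hc⟩ | ⟨rfl, hr⟩
  · exact MD_add_two_mul_LC_le_of_row_move hc hb
  · have hrow := MD_add_two_mul_LC_le_of_row_move (b := b.swap)
      (s := (prodComm (Fin n) (Fin n)).permCongr s) (r := c₁) hr (by simp [hb])
    have htranspose := prodComm_permCongr_swap_trans s (r₁, c₁) (r₂, c₁)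
    rw [Prod.swap_prod_mk, Prod.swap_prod_mk] at htranspose
    rwa [← htranspose, MD_prodComm_permCongr, LC_prodComm_permCongr, MD_prodComm_permCongr,
      LC_prodComm_permCongr] at hrow

theorem Nat.le_add_of_forall_le_succ_add_one {g : ℕ → ℕ} {k : ℕ}
    (h : ∀ i < k, g i ≤ g (i + 1) + 1) : g 0 ≤ g k + k := by
  induction k with
  | zero => simp
  | succ k ih =>
    have hprefix := ih fun i hi => h i (by omega)
    have hlast := h k (by omega)
    omega

theorem MD_refl (b : Fin n × Fin n) : MD b (Equiv.refl _) = 0 := by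
  simp [MD, mdist]

theorem LC_refl (b : Fin n × Fin n) : LC b (Equiv.refl _) = 0 := by
  have hrow (r : Fin n) : lcRow b (Equiv.refl _) r = 0 :=
    coverNumber_eq_zero fun _ _ h => h.1.not_gt h.2.2.2.2.2
  have hcol (c : Fin n) : lcCol b (Equiv.refl _) c = 0 :=
    coverNumber_eq_zero fun _ _ h => h.1.not_gt h.2.2.2.2.2
  simp [LC, hrow, hcol]

/-- Admissibility of Manhattan distance plus linear conflicts: for any solvable
configuration, `MD s + 2 * LC s` is a lower bound on the number of moves of any
solution reaching the goal (identity) configuration. -/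
theorem md_plus_2lc_admissible (b : Fin n × Fin n)
    (s : Equiv.Perm (Fin n × Fin n)) (k : ℕ) (f : ℕ → Equiv.Perm (Fin n × Fin n))
    (h0 : f 0 = s) (hk : f k = Equiv.refl _)
    (hmove : ∀ i < k, Move b (f i) (f (i + 1))) :
    MD b s + 2 * LC b s ≤ k := by
  have hchain := Nat.le_add_of_forall_le_succ_add_one (g := fun i => MD b (f i) + 2 * LC b (f i))
    fun i hi => MD_add_two_mul_LC_le_of_move (hmove i hi)
  simp only [h0, hk, MD_refl, LC_refl] at hchain
  omega
end
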